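/- arXiv:1007.1500 — 2 statements merged into one kernel-verified Lean document; each statement's English description precedes it below -/
import Mathlib

section
/- Let a < 0, and let p_{a,0} = (y_{a,0}, y_{a,0}) with y_{a,0} = (1 + √(1 − 4a))/2 be the fixed point of the endomorphism φ_{a,0}. Then the unstable set of p_{a,0} is exactly W^u(p_{a,0}) = {(x, x² + a) : x ≥ a}. -/
open Filter Topology Function

/-- The degenerate Hénon endomorphism `φ_{a,0}(x,y) = (y, a + y²)`. -/
noncomputable def henonPhi0 (a : ℝ) : ℝ × ℝ → ℝ × ℝ :=
  fun p => (p.2, a + p.2 ^ 2)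

/-- The unstable set of a fixed point `p` of an endomorphism `F` of `ℝ²`: the set of points
`q` admitting a backward orbit `(qₙ)` with `q₀ = q`, `F(qₙ₊₁) = qₙ`, and `qₙ → p`. -/
def unstableSet (F : ℝ × ℝ → ℝ × ℝ) (p : ℝ × ℝ) : Set (ℝ × ℝ) :=
  {q : ℝ × ℝ | ∃ s : ℕ → ℝ × ℝ, s 0 = q ∧ (∀ n : ℕ, F (s (n + 1)) = s n) ∧
    Tendsto s atTop (𝓝 p)}

/-!
Every point of `W^u(p)` has two preimages under `φ = φ_{a,0}`, and `φ ∘ φ` maps `ℝ²` into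
the parabola `{(x, x² + a) : x ≥ a}`. Conversely, `φ` preserves that parabola and acts on it
as the one-dimensional map `x ↦ x² + a`, whose inverse branch `u ↦ √(u - a)` pulls any
`x ≥ a` towards the repelling fixed point `y₀`: the branch contracts distances to `y₀` by the
factor `1 / y₀`, and `y₀ > 1` exactly because `a < 0`.
-/

theorem unstableSet_subset_range_iterate (F : ℝ × ℝ → ℝ × ℝ) (p : ℝ × ℝ) (n : ℕ) :
    unstableSet F p ⊆ Set.range F^[n] := by
  rintro q ⟨s, rfl, hs, -⟩
  refine ⟨s n, ?_⟩
  induction n with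
  | zero => rfl
  | succ n ih => rw [iterate_succ_apply, hs, ih]

theorem mem_unstableSet_of_semiconj {α : Type*} [TopologicalSpace α]
    {F : ℝ × ℝ → ℝ × ℝ} {f : α → α} {γ : α → ℝ × ℝ} (hγ : Semiconj γ f F)
    {t : ℕ → α} (ht : ∀ n, f (t (n + 1)) = t n) {c : α} (htc : Tendsto t atTop (𝓝 c))
    (hγc : ContinuousAt γ c) : γ (t 0) ∈ unstableSet F (γ c) :=
  ⟨γ ∘ t, rfl, fun n => by rw [comp_apply, ← hγ, ht, comp_apply], hγc.tendsto.comp htc⟩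

theorem tendsto_iterate_of_dist_le_mul {α : Type*} [PseudoMetricSpace α] {g : α → α}
    {s : Set α} {c x : α} {k : ℝ} (hk₀ : 0 ≤ k) (hk : k < 1) (hg : Set.MapsTo g s s)
    (hgc : ∀ u ∈ s, dist (g u) c ≤ k * dist u c) (hx : x ∈ s) :
    Tendsto (fun n => g^[n] x) atTop (𝓝 c) := by
  have hbound : ∀ n, dist (g^[n] x) c ≤ dist x c * k ^ n := by
    intro n
    induction n with
    | zero => simp
    | succ n ih =>
      calc dist (g^[n + 1] x) c ≤ k * dist (g^[n] x) c := by
            rw [iterate_succ_apply']; exact hgc _ (hg.iterate n hx)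
        _ ≤ k * (dist x c * k ^ n) := by gcongr
        _ = dist x c * k ^ (n + 1) := by ring
  have hgeom : Tendsto (fun n => dist x c * k ^ n) atTop (𝓝 0) := by
    simpa using (tendsto_pow_atTop_nhds_zero_of_lt_one hk₀ hk).const_mul (dist x c)
  exact tendsto_iff_dist_tendsto_zero.2 (squeeze_zero (fun _ => dist_nonneg) hbound hgeom)

theorem abs_sqrt_sub_le {v c : ℝ} (hv : 0 ≤ v) (hc : 0 < c) : |√v - c| ≤ |v - c ^ 2| / c := by
  have hsum : 0 ≤ √v + c := by positivity
  rw [le_div_iff₀ hc]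
  calc |√v - c| * c ≤ |√v - c| * (√v + c) := by gcongr; exact le_add_of_nonneg_left (by positivity)
    _ = |v - c ^ 2| := by
      rw [← abs_of_nonneg hsum, ← abs_mul]
      congr 1
      linear_combination Real.sq_sqrt hv

/-- The coordinate `y_{a,0}` of the fixed point `p_{a,0} = (y_{a,0}, y_{a,0})` of `φ_{a,0}`. -/
noncomputable def henonFixedCoord (a : ℝ) : ℝ := (1 + √(1 - 4 * a)) / 2

theorem henonFixedCoord_sq_add {a : ℝ} (ha : a ≤ 1 / 4) :
    henonFixedCoord a ^ 2 + a = henonFixedCoord a := by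
  have := Real.sq_sqrt (show 0 ≤ 1 - 4 * a by linarith)
  unfold henonFixedCoord
  linear_combination this / 4

theorem one_lt_henonFixedCoord {a : ℝ} (ha : a < 0) : 1 < henonFixedCoord a := by
  have : 1 < √(1 - 4 * a) := by rw [Real.lt_sqrt zero_le_one]; linarith
  unfold henonFixedCoord
  linarith

theorem sq_add_sqrt_sub {a u : ℝ} (hu : a ≤ u) : √(u - a) ^ 2 + a = u := by
  rw [Real.sq_sqrt (sub_nonneg.2 hu)]; ring

theorem mapsTo_sqrt_sub_Ici {a : ℝ} (ha : a ≤ 0) :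
    Set.MapsTo (fun u => √(u - a)) (Set.Ici a) (Set.Ici a) :=
  fun _ _ => ha.trans (Real.sqrt_nonneg _)

theorem tendsto_iterate_sqrt_sub {a x : ℝ} (ha : a < 0) (hx : a ≤ x) :
    Tendsto (fun n => (fun u => √(u - a))^[n] x) atTop (𝓝 (henonFixedCoord a)) := by
  set y₀ := henonFixedCoord a
  have hy₀ : 0 < y₀ := one_pos.trans (one_lt_henonFixedCoord ha)
  refine tendsto_iterate_of_dist_le_mul (k := 1 / y₀) (by positivity)
    ((div_lt_one hy₀).2 (one_lt_henonFixedCoord ha)) (mapsTo_sqrt_sub_Ici ha.le) ?_ hx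
  intro u hu
  have hfix : u - a - y₀ ^ 2 = u - y₀ := by
    linear_combination -henonFixedCoord_sq_add (by linarith : a ≤ 1 / 4)
  rw [Real.dist_eq, Real.dist_eq, one_div_mul_eq_div, ← hfix]
  exact abs_sqrt_sub_le (sub_nonneg.2 hu) hy₀

theorem henonPhi0_semiconj (a : ℝ) :
    Semiconj (fun x => (x, x ^ 2 + a)) (fun x => x ^ 2 + a) (henonPhi0 a) :=
  fun x => Prod.ext rfl (by simp only [henonPhi0]; ring)

theorem stmt_13 (a : ℝ) (ha : a < 0) :
    unstableSet (henonPhi0 a)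
        ((1 + Real.sqrt (1 - 4 * a)) / 2, (1 + Real.sqrt (1 - 4 * a)) / 2) =
      {p : ℝ × ℝ | ∃ x : ℝ, a ≤ x ∧ p = (x, x ^ 2 + a)} := by
  ext q
  constructor
  · intro hq
    obtain ⟨r, rfl⟩ := unstableSet_subset_range_iterate _ _ 2 hq
    refine ⟨a + r.2 ^ 2, le_add_of_nonneg_right (sq_nonneg _), ?_⟩
    simp only [iterate_succ, iterate_zero, comp_apply, id, henonPhi0]
    ring_nf
  · rintro ⟨x, hx, rfl⟩
    set g : ℝ → ℝ := fun u => √(u - a)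
    have hback : ∀ n, g^[n + 1] x ^ 2 + a = g^[n] x := fun n => by
      rw [iterate_succ_apply']
      exact sq_add_sqrt_sub ((mapsTo_sqrt_sub_Ici ha.le).iterate n hx)
    have hmem := mem_unstableSet_of_semiconj (henonPhi0_semiconj a) hback
      (tendsto_iterate_sqrt_sub ha hx) (by fun_prop)
    rwa [henonFixedCoord_sq_add (by linarith)] at hmem
end

section
/- For the parameter values a = −2, b = 0: the fixed point is p = p_{−2,0} = (2,2), and the point q = (−2, 2) satisfies q ≠ p, q ∈ W^u(p) (where the unstable set is defined via backward orbits), and φ_{−2,0}(q) = p. Hence q is a homoclinic point of p: it lies in the intersection of the unstable set of p and the stable set of p. -/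
open Filter Topology

/-- The stable set of a fixed point `p` of an endomorphism `F` of `ℝ²`: the set of points
whose forward orbit converges to `p`. -/
def stableSet (F : ℝ × ℝ → ℝ × ℝ) (p : ℝ × ℝ) : Set (ℝ × ℝ) :=
  {q : ℝ × ℝ | Tendsto (fun n : ℕ => F^[n] q) atTop (𝓝 p)}

/-! For `a = -2` the substitution `y = 2 cos θ` turns `y ↦ y² - 2` into angle doubling, so
halving the angle of `(2 cos π, 2 cos 2π) = (-2, 2)` again and again gives a backward orbit
that tends to `(2 cos 0, 2 cos 0) = (2, 2)`; forwards, `(-2, 2)` lands on the fixed point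
after a single step. -/

open Real

lemma mem_stableSet_of_apply_eq {F : ℝ × ℝ → ℝ × ℝ} {p q : ℝ × ℝ}
    (hp : Function.IsFixedPt F p) (hq : F q = p) : q ∈ stableSet F p := by
  refine tendsto_atTop_of_eventually_const (i₀ := 1) fun n hn => ?_
  obtain ⟨m, rfl⟩ := Nat.exists_eq_add_of_le' hn
  rw [Function.iterate_succ_apply, hq, Function.iterate_fixed hp]

noncomputable def chebyshevPoint (θ : ℝ) : ℝ × ℝ :=
  (2 * cos θ, 2 * cos (2 * θ))

lemma continuous_chebyshevPoint : Continuous chebyshevPoint := by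
  unfold chebyshevPoint
  fun_prop

lemma henonPhi0_neg_two_chebyshevPoint (θ : ℝ) :
    henonPhi0 (-2) (chebyshevPoint θ) = chebyshevPoint (2 * θ) := by
  simp only [henonPhi0, chebyshevPoint, cos_two_mul (2 * θ), Prod.mk.injEq, true_and]
  ring

lemma chebyshevPoint_mem_unstableSet (θ : ℝ) :
    chebyshevPoint θ ∈ unstableSet (henonPhi0 (-2)) (2, 2) := by
  refine ⟨fun n => chebyshevPoint (θ / 2 ^ n), by simp, fun n => ?_, ?_⟩
  · rw [henonPhi0_neg_two_chebyshevPoint, pow_succ, ← div_div, mul_div_cancel₀ _ two_ne_zero]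
  · have h_angle : Tendsto (fun n : ℕ => θ / 2 ^ n) atTop (𝓝 0) :=
      tendsto_const_nhds.div_atTop (tendsto_pow_atTop_atTop_of_one_lt one_lt_two)
    have h_limit : chebyshevPoint 0 = (2, 2) := by norm_num [chebyshevPoint]
    rw [← h_limit]
    exact (continuous_chebyshevPoint.tendsto 0).comp h_angle

theorem stmt_14 :
    ((-2, 2) : ℝ × ℝ) ≠ ((2, 2) : ℝ × ℝ) ∧
    ((-2, 2) : ℝ × ℝ) ∈ unstableSet (henonPhi0 (-2)) (2, 2) ∧
    henonPhi0 (-2) (-2, 2) = (2, 2) ∧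
    ((-2, 2) : ℝ × ℝ) ∈ unstableSet (henonPhi0 (-2)) (2, 2) ∩ stableSet (henonPhi0 (-2)) (2, 2) := by
  have h_unstable : ((-2, 2) : ℝ × ℝ) ∈ unstableSet (henonPhi0 (-2)) (2, 2) := by
    have h_point : chebyshevPoint π = (-2, 2) := by norm_num [chebyshevPoint]
    simpa only [h_point] using chebyshevPoint_mem_unstableSet π
  have h_fixed : Function.IsFixedPt (henonPhi0 (-2)) (2, 2) := by
    norm_num [Function.IsFixedPt, henonPhi0]
  have h_step : henonPhi0 (-2) (-2, 2) = (2, 2) := by norm_num [henonPhi0]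
  exact ⟨by norm_num, h_unstable, h_step, h_unstable, mem_stableSet_of_apply_eq h_fixed h_step⟩
end
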